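/- arXiv:2302.14034 — 6 statements merged into one kernel-verified Lean document; each statement's English description precedes it below -/
import Mathlib

section
/- Let r1 ∈ (1/2, 1) and r2 > 0 satisfy 2 r1 + r2 > 2, and let C > 0. If f : ℝ² → ℂ is a measurable function satisfying ‖f(s,u)‖ ≤ C · |s·u|^{−r1} · ( 1_{[s−1, s)}(u) + |s − u|^{−r2} · 1_{(−∞, s−1)}(u) ) for all (s,u) ∈ ℝ², then ∫_{ℝ²} ‖f(s,u)‖ du ds < ∞. -/
/-!
Substituting `u = s - v`, the double integral of the kernel becomes
`∫ w(v) ∫ |s|^{-r1} |s - v|^{-r1} ds dv` with `w = 1_{(0,1]} + |v|^{-r2} 1_{(1,∞)}`.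
Scaling `s = v t` shows that the inner integral is `|v|^{1 - 2 r1} ∫ |t|^{-r1} |t - 1|^{-r1} dt`,
and this last integral is finite: the singularities at `0` and `1` are integrable as `r1 < 1`,
and the integrand decays like `|t|^{-2 r1}` with `2 r1 > 1`. What remains,
`∫ w(v) |v|^{1 - 2 r1} dv`, converges at `0` because `1 - 2 r1 > -1` and at infinity because
`1 - 2 r1 - r2 < -1`.
-/

open MeasureTheory Set Real Filter

theorem locallyIntegrable_abs_sub_rpow_neg {a : ℝ} (ha : a < 1) (c : ℝ) :
    LocallyIntegrable (fun t : ℝ => |t - c| ^ (-a)) := by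
  have h0 : LocallyIntegrable (fun t : ℝ => |t| ^ (-a)) :=
    locallyIntegrable_of_norm_le_rpow (C := 1) (by simp) (by simpa using ha)
      (Eventually.of_forall fun t => by simp [abs_nonneg, Real.abs_rpow_of_nonneg])
      (measurable_abs.pow_const _).aestronglyMeasurable
  rw [← map_sub_right_eq_self volume c] at h0
  exact (locallyIntegrable_map_homeomorph (Homeomorph.subRight c)).1 h0

theorem rpow_neg_mul_rpow_neg_le_of_le {a b m x y : ℝ} (ha : 0 ≤ a) (hb : 0 ≤ b) (hm : 0 < m)
    (hx : m ≤ x) (hy : m ≤ y) : x ^ (-a) * y ^ (-b) ≤ m ^ (-(a + b)) := by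
  rw [neg_add, rpow_add hm]
  exact mul_le_mul (rpow_le_rpow_of_nonpos hm hx (by linarith))
    (rpow_le_rpow_of_nonpos hm hy (by linarith)) (rpow_nonneg (hm.le.trans hy) _)
    (rpow_nonneg hm.le _)

theorem abs_rpow_neg_mul_abs_sub_one_rpow_neg_le {a b : ℝ} (ha : 0 ≤ a) (hb : 0 ≤ b) (t : ℝ) :
    |t| ^ (-a) * |t - 1| ^ (-b) ≤ 2 ^ b * |t| ^ (-a) + 2 ^ a * |t - 1| ^ (-b) := by
  have h2 : ∀ {c x : ℝ}, 0 ≤ c → 2⁻¹ ≤ x → x ^ (-c) ≤ 2 ^ c := fun hc hx => by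
    simpa [rpow_neg, inv_rpow] using rpow_le_rpow_of_nonpos (by norm_num) hx (neg_nonpos.2 hc)
  rcases le_or_gt 2⁻¹ |t - 1| with h | h
  · nlinarith [h2 hb h, rpow_nonneg (abs_nonneg t) (-a), rpow_nonneg (abs_nonneg (t - 1)) (-b),
      rpow_nonneg (zero_le_two (α := ℝ)) a]
  · have : 2⁻¹ ≤ |t| := by
      have := abs_sub_abs_le_abs_sub 1 t; rw [abs_sub_comm 1 t] at this; norm_num at this; linarith
    nlinarith [h2 ha this, rpow_nonneg (abs_nonneg t) (-a), rpow_nonneg (abs_nonneg (t - 1)) (-b),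
      rpow_nonneg (zero_le_two (α := ℝ)) b]

theorem integrable_abs_rpow_neg_mul_abs_sub_one_rpow_neg {a b : ℝ} (ha : a < 1) (hb : b < 1)
    (hab : 1 < a + b) : Integrable (fun t : ℝ => |t| ^ (-a) * |t - 1| ^ (-b)) := by
  have ha0 : 0 ≤ a := by linarith
  have hb0 : 0 ≤ b := by linarith
  have hmeas : AEStronglyMeasurable (fun t : ℝ => |t| ^ (-a) * |t - 1| ^ (-b)) :=
    ((measurable_abs.pow_const _).mul
      ((measurable_id.sub_const 1).abs.pow_const _)).aestronglyMeasurable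
  have hloc : LocallyIntegrable (fun t : ℝ => |t| ^ (-a) * |t - 1| ^ (-b)) := by
    refine (((locallyIntegrable_abs_sub_rpow_neg ha 0).smul ((2 : ℝ) ^ b)).add
      ((locallyIntegrable_abs_sub_rpow_neg hb 1).smul ((2 : ℝ) ^ a))).mono hmeas
      (Eventually.of_forall fun t => ?_)
    simp only [sub_zero, Pi.add_apply, Pi.smul_apply, smul_eq_mul]
    rw [norm_of_nonneg (by positivity), norm_of_nonneg (by positivity)]
    exact abs_rpow_neg_mul_abs_sub_one_rpow_neg_le ha0 hb0 t
  -- beyond `|t| = 3` both `|t|` and `|t - 1|` are at least `(1 + |t|) / 2`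
  have hdecay : (fun t : ℝ => |t| ^ (-a) * |t - 1| ^ (-b)) =O[cocompact ℝ]
      fun t => (1 + ‖t‖) ^ (-(a + b)) := by
    refine Asymptotics.IsBigO.of_bound (2 ^ (a + b)) ?_
    filter_upwards [tendsto_norm_cocompact_atTop.eventually_ge_atTop 3] with t ht
    rw [norm_eq_abs] at ht ⊢
    have hm : 0 < (1 + |t|) / 2 := by positivity
    have h1 : (1 + |t|) / 2 ≤ |t - 1| := by
      have := abs_sub_abs_le_abs_sub t 1; norm_num at this; linarith
    calc ‖|t| ^ (-a) * |t - 1| ^ (-b)‖ ≤ ((1 + |t|) / 2) ^ (-(a + b)) := by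
          rw [norm_of_nonneg (by positivity)]
          exact rpow_neg_mul_rpow_neg_le_of_le ha0 hb0 hm (by linarith) h1
      _ = 2 ^ (a + b) * ‖(1 + |t|) ^ (-(a + b))‖ := by
          rw [norm_of_nonneg (by positivity), div_rpow (by positivity) zero_le_two,
            rpow_neg zero_le_two, div_inv_eq_mul, mul_comm]
  exact hloc.integrable_of_isBigO_cocompact hdecay
    ((integrable_one_add_norm (by simpa using hab)).integrableAtFilter _)

theorem Real.lintegral_comp_mul_left (f : ℝ → ENNReal) {c : ℝ} (hc : c ≠ 0) :
    ∫⁻ x, f (c * x) = ENNReal.ofReal |c⁻¹| * ∫⁻ x, f x := by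
  rw [← smul_eq_mul, ← lintegral_smul_measure, ← Real.map_volume_mul_left hc]
  exact ((Homeomorph.mulLeft₀ c hc).measurableEmbedding.lintegral_map f).symm

theorem lintegral_abs_rpow_neg_mul_abs_sub_rpow_neg (a b : ℝ) {v : ℝ} (hv : v ≠ 0) :
    ∫⁻ s, ENNReal.ofReal (|s| ^ (-a) * |s - v| ^ (-b)) =
      ENNReal.ofReal (|v| ^ (1 - a - b)) * ∫⁻ t, ENNReal.ofReal (|t| ^ (-a) * |t - 1| ^ (-b)) := by
  have hv' : 0 < |v| := abs_pos.2 hv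
  have hscale : ∀ t : ℝ, |v * t| ^ (-a) * |v * t - v| ^ (-b) =
      |v| ^ (-a - b) * (|t| ^ (-a) * |t - 1| ^ (-b)) := fun t => by
    rw [show v * t - v = v * (t - 1) by ring, abs_mul, abs_mul,
      mul_rpow hv'.le (abs_nonneg _), mul_rpow hv'.le (abs_nonneg _), sub_eq_add_neg (-a),
      rpow_add hv']
    ring
  have key := Real.lintegral_comp_mul_left
    (fun s => ENNReal.ofReal (|s| ^ (-a) * |s - v| ^ (-b))) hv
  simp only [hscale, ENNReal.ofReal_mul (rpow_nonneg hv'.le _)] at key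
  rw [lintegral_const_mul' _ _ ENNReal.ofReal_ne_top] at key
  calc ∫⁻ s, ENNReal.ofReal (|s| ^ (-a) * |s - v| ^ (-b))
      = ENNReal.ofReal |v| *
          (ENNReal.ofReal |v⁻¹| * ∫⁻ s, ENNReal.ofReal (|s| ^ (-a) * |s - v| ^ (-b))) := by
        rw [← mul_assoc, ← ENNReal.ofReal_mul hv'.le, abs_inv, mul_inv_cancel₀ hv'.ne',
          ENNReal.ofReal_one, one_mul]
    _ = _ := by
        rw [← key, ← mul_assoc, ← ENNReal.ofReal_mul hv'.le, sub_sub, sub_eq_add_neg (1 : ℝ),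
          rpow_add hv', rpow_one, sub_eq_add_neg (-a), neg_add]

theorem lintegral_lintegral_abs_rpow_neg_mul_abs_sub_rpow_neg_mul (a b : ℝ) {w : ℝ → ENNReal}
    (hw : Measurable w) :
    ∫⁻ s, ∫⁻ v, ENNReal.ofReal (|s| ^ (-a) * |s - v| ^ (-b)) * w v =
      (∫⁻ t, ENNReal.ofReal (|t| ^ (-a) * |t - 1| ^ (-b))) *
        ∫⁻ v, ENNReal.ofReal (|v| ^ (1 - a - b)) * w v := by
  rw [lintegral_lintegral_swap (by fun_prop), ← lintegral_const_mul _ (by fun_prop)]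
  refine lintegral_congr_ae ?_
  filter_upwards [Measure.ae_ne volume 0] with v hv
  rw [lintegral_mul_const _ (by fun_prop), lintegral_abs_rpow_neg_mul_abs_sub_rpow_neg a b hv]
  ring

noncomputable def singularKernel (r1 r2 s u : ℝ) : ℝ :=
  |s| ^ (-r1) * |u| ^ (-r1) *
    ((Ico (s - 1) s).indicator 1 u + |s - u| ^ (-r2) * (Iio (s - 1)).indicator 1 u)

noncomputable def kernelWeight (r2 v : ℝ) : ℝ :=
  (Ioc 0 1).indicator 1 v + |v| ^ (-r2) * (Ioi 1).indicator 1 v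

theorem singularKernel_nonneg (r1 r2 s u : ℝ) : 0 ≤ singularKernel r1 r2 s u :=
  mul_nonneg (by positivity) (add_nonneg (indicator_nonneg (fun _ _ => zero_le_one) _)
    (mul_nonneg (by positivity) (indicator_nonneg (fun _ _ => zero_le_one) _)))

theorem measurable_kernelWeight (r2 : ℝ) : Measurable (kernelWeight r2) := by
  unfold kernelWeight
  fun_prop (disch := measurability)

theorem singularKernel_sub_right (r1 r2 s v : ℝ) :
    singularKernel r1 r2 s (s - v) = |s| ^ (-r1) * |s - v| ^ (-r1) * kernelWeight r2 v := by
  have hIco : (Ico (s - 1) s).indicator (1 : ℝ → ℝ) (s - v) = (Ioc 0 1).indicator 1 v := by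
    simp only [indicator_apply, mem_Ico, mem_Ioc, Pi.one_apply]
    congr 1; apply propext; constructor <;> rintro ⟨h1, h2⟩ <;> constructor <;> linarith
  have hIio : (Iio (s - 1)).indicator (1 : ℝ → ℝ) (s - v) = (Ioi 1).indicator 1 v := by
    simp only [indicator_apply, mem_Iio, mem_Ioi, Pi.one_apply]
    congr 1; apply propext; constructor <;> intro h <;> linarith
  rw [singularKernel, kernelWeight, hIco, hIio, sub_sub_cancel]

theorem integrable_abs_rpow_mul_kernelWeight {p r2 : ℝ} (hp : -1 < p) (hpr : p - r2 < -1) :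
    Integrable (fun v : ℝ => |v| ^ p * kernelWeight r2 v) := by
  have hnear : IntegrableOn (fun v : ℝ => |v| ^ p) (Ioc 0 1) := by
    have := (locallyIntegrable_abs_sub_rpow_neg (a := -p) (by linarith) 0).integrableOn_isCompact
      (isCompact_Icc (a := 0) (b := 1))
    simpa using this.mono_set Ioc_subset_Icc_self
  have htail : IntegrableOn (fun v : ℝ => |v| ^ (p - r2)) (Ioi 1) :=
    (integrableOn_Ioi_rpow_of_lt hpr one_pos).congr_fun
      (fun v hv => by simp [abs_of_pos (one_pos.trans (mem_Ioi.1 hv))]) measurableSet_Ioi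
  have hsplit : (fun v : ℝ => |v| ^ p * kernelWeight r2 v) =
      (Ioc 0 1).indicator (fun v => |v| ^ p) + (Ioi 1).indicator (fun v => |v| ^ (p - r2)) := by
    funext v
    by_cases h1 : v ∈ Ioc 0 1
    · have h2 : v ∉ Ioi 1 := fun h => not_lt.2 h1.2 h
      simp [kernelWeight, h1, h2]
    · by_cases h2 : v ∈ Ioi 1
      · simp [kernelWeight, h1, h2, sub_eq_add_neg,
          rpow_add (one_pos.trans (mem_Ioi.1 h2) |>.trans_le (le_abs_self v))]
      · simp [kernelWeight, h1, h2]
  rw [hsplit]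
  exact (hnear.integrable_indicator measurableSet_Ioc).add
    (htail.integrable_indicator measurableSet_Ioi)

theorem lintegral_lintegral_singularKernel_lt_top {r1 r2 : ℝ} (hr1 : 1 / 2 < r1) (hr1' : r1 < 1)
    (hsum : 2 < 2 * r1 + r2) :
    ∫⁻ s, ∫⁻ u, ENNReal.ofReal (singularKernel r1 r2 s u) < ⊤ := by
  have hprofile : ∫⁻ t, ENNReal.ofReal (|t| ^ (-r1) * |t - 1| ^ (-r1)) < ⊤ :=
    (integrable_abs_rpow_neg_mul_abs_sub_one_rpow_neg hr1' hr1' (by linarith)).lintegral_lt_top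
  have hweight :
      ∫⁻ v, ENNReal.ofReal (|v| ^ (1 - r1 - r1)) * ENNReal.ofReal (kernelWeight r2 v) < ⊤ := by
    rw [lintegral_congr fun v => (ENNReal.ofReal_mul (rpow_nonneg (abs_nonneg v) _)).symm]
    exact (integrable_abs_rpow_mul_kernelWeight (r2 := r2) (by linarith)
      (by linarith)).lintegral_lt_top
  calc ∫⁻ s, ∫⁻ u, ENNReal.ofReal (singularKernel r1 r2 s u)
      = ∫⁻ s, ∫⁻ v, ENNReal.ofReal (|s| ^ (-r1) * |s - v| ^ (-r1)) *
          ENNReal.ofReal (kernelWeight r2 v) := by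
        refine lintegral_congr fun s => ?_
        rw [← lintegral_sub_left_eq_self _ s]
        simp only [singularKernel_sub_right]
        exact lintegral_congr fun v => ENNReal.ofReal_mul (by positivity)
    _ = (∫⁻ t, ENNReal.ofReal (|t| ^ (-r1) * |t - 1| ^ (-r1))) *
          ∫⁻ v, ENNReal.ofReal (|v| ^ (1 - r1 - r1)) * ENNReal.ofReal (kernelWeight r2 v) :=
        lintegral_lintegral_abs_rpow_neg_mul_abs_sub_rpow_neg_mul r1 r1
          (measurable_kernelWeight r2).ennreal_ofReal
    _ < ⊤ := ENNReal.mul_lt_top hprofile hweight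

theorem integrable_of_kernel_bound_general
    (r1 r2 C : ℝ) (hr1 : 1 / 2 < r1) (hr1' : r1 < 1)
    (hsum : 2 < 2 * r1 + r2)
    (f : ℝ → ℝ → ℂ)
    (hbound : ∀ s u : ℝ, s ≠ 0 → u ≠ 0 →
      ‖f s u‖ ≤ C * (|s| ^ (-r1) * |u| ^ (-r1)) *
        ((Ico (s - 1) s).indicator 1 u + |s - u| ^ (-r2) * (Iio (s - 1)).indicator 1 u)) :
    ∫⁻ s : ℝ, ∫⁻ u : ℝ, ENNReal.ofReal ‖f s u‖ < ⊤ := by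
  calc ∫⁻ s, ∫⁻ u, ENNReal.ofReal ‖f s u‖
      ≤ ∫⁻ s, ∫⁻ u, ENNReal.ofReal C * ENNReal.ofReal (singularKernel r1 r2 s u) := by
        refine lintegral_mono_ae ?_
        filter_upwards [Measure.ae_ne volume 0] with s hs
        refine lintegral_mono_ae ?_
        filter_upwards [Measure.ae_ne volume 0] with u hu
        rw [← ENNReal.ofReal_mul' (singularKernel_nonneg r1 r2 s u), singularKernel, ← mul_assoc]
        exact ENNReal.ofReal_le_ofReal (hbound s u hs hu)
    _ = ENNReal.ofReal C * ∫⁻ s, ∫⁻ u, ENNReal.ofReal (singularKernel r1 r2 s u) := by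
        simp only [lintegral_const_mul' _ _ ENNReal.ofReal_ne_top]
    _ < ⊤ := ENNReal.mul_lt_top ENNReal.ofReal_lt_top
        (lintegral_lintegral_singularKernel_lt_top hr1 hr1' hsum)

/-- Lemma 3.2 of the paper: integrability of a function dominated by
`C * |s|^{-r1} |u|^{-r1} (1_{[s-1,s)}(u) + |s-u|^{-r2} 1_{(-∞,s-1)}(u))`. -/
theorem integrable_of_kernel_bound
    (r1 r2 C : ℝ) (hr1 : 1 / 2 < r1) (hr1' : r1 < 1) (hr2 : 0 < r2)
    (hsum : 2 < 2 * r1 + r2) (hC : 0 < C)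
    (f : ℝ → ℝ → ℂ) (hf : Measurable (fun p : ℝ × ℝ => f p.1 p.2))
    (hbound : ∀ s u : ℝ, s ≠ 0 → u ≠ 0 →
      ‖f s u‖ ≤ C * (|s| ^ (-r1) * |u| ^ (-r1)) *
        ((Ico (s - 1) s).indicator 1 u + |s - u| ^ (-r2) * (Iio (s - 1)).indicator 1 u)) :
    ∫⁻ s : ℝ, ∫⁻ u : ℝ, ENNReal.ofReal ‖f s u‖ < ⊤ :=
  integrable_of_kernel_bound_general r1 r2 C hr1 hr1' hsum f hbound
end

section
/- Let α ∈ (0,2) and H ∈ (1/2, 1) satisfy α(1−H) < 1/2, set γ = 1 − H − 1/α, and define h(s,u) = ((1 − exp(i(s−u)))/(i(s−u))) · |s·u|^γ for u < s and h(s,u) = 0 for u ≥ s. Then ∫_ℝ ∫_ℝ ‖h(s,u)‖^α ds du < ∞. -/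
/-! For `u < s` put `t = s - u`. Since `‖1 - e^{it}‖ ≤ min t 2`, the phase factor is at most
`3 / (1 + t)`, so with `c = γα = α(1 - H) - 1 ∈ (-1, -1/2)` the integrand is dominated by
`3^α (1 + t)^{-α} |s|^c |u|^c`. Substituting `s = u + t`, then `u = t v`, and using Tonelli, the
double integral of this majorant becomes
`∫_{t > 0} (1 + t)^{-α} t^{2c+1} dt · ∫_ℝ |v + 1|^c |v|^c dv`.
The first factor is finite because `-1 < 2c + 1` and `2c + 1 - α = α(1 - 2H) - 1 < -1`; in the
second, `c > -1` controls the singularities at `0` and `-1` and `2c < -1` the decay at infinity. -/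

open MeasureTheory Set
open scoped ENNReal

theorem norm_one_sub_exp_I_mul_div_I_mul_le {t : ℝ} (ht : 0 < t) :
    ‖(1 - Complex.exp (Complex.I * t)) / (Complex.I * t)‖ ≤ 3 / (1 + t) := by
  have hden : ‖Complex.I * t‖ = t := by simp [abs_of_pos ht]
  have hnum_le_t : ‖1 - Complex.exp (Complex.I * t)‖ ≤ t := by
    simpa [norm_sub_rev, abs_of_pos ht] using Real.norm_exp_I_mul_ofReal_sub_one_le (x := t)
  have hnum_le_two : ‖1 - Complex.exp (Complex.I * t)‖ ≤ 2 := by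
    calc _ ≤ ‖(1 : ℂ)‖ + ‖Complex.exp (Complex.I * t)‖ := norm_sub_le _ _
      _ = 2 := by rw [mul_comm, Complex.norm_exp_ofReal_mul_I]; norm_num
  rw [norm_div, hden, div_le_div_iff₀ ht (by positivity)]
  rcases le_total t 2 with h | h <;> nlinarith [norm_nonneg (1 - Complex.exp (Complex.I * t))]

theorem norm_one_sub_exp_div_mul_abs_rpow_mul_abs_rpow_rpow_le {α γ s u : ℝ} (hα : 0 ≤ α)
    (hus : u < s) :
    ‖(1 - Complex.exp (Complex.I * ((s : ℂ) - (u : ℂ)))) / (Complex.I * ((s : ℂ) - (u : ℂ))) *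
        ((|s| ^ γ * |u| ^ γ : ℝ) : ℂ)‖ ^ α
      ≤ 3 ^ α * ((1 + (s - u)) ^ (-α) * |s| ^ (γ * α) * |u| ^ (γ * α)) := by
  have ht : 0 < s - u := sub_pos.2 hus
  have hs : 0 ≤ |s| ^ γ := by positivity
  have hu : 0 ≤ |u| ^ γ := by positivity
  calc _ ≤ (3 / (1 + (s - u)) * (|s| ^ γ * |u| ^ γ)) ^ α := by
        rw [norm_mul, Complex.norm_real, Real.norm_of_nonneg (mul_nonneg hs hu),
          ← Complex.ofReal_sub]
        gcongr
        exact norm_one_sub_exp_I_mul_div_I_mul_le ht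
    _ = _ := by
        rw [Real.mul_rpow (by positivity) (mul_nonneg hs hu), Real.mul_rpow hs hu,
          Real.div_rpow (by norm_num) (by positivity), Real.rpow_neg (by positivity),
          ← Real.rpow_mul (abs_nonneg s), ← Real.rpow_mul (abs_nonneg u), div_eq_mul_inv]
        ring

theorem integrableOn_Ioi_one_add_rpow_mul_rpow {a b : ℝ} (hb : -1 < b) (hab : a + b < -1) :
    IntegrableOn (fun t : ℝ => (1 + t) ^ a * t ^ b) (Ioi 0) := by
  have ha : a ≤ 0 := by linarith
  have hmeas : AEStronglyMeasurable (fun t : ℝ => (1 + t) ^ a * t ^ b) := by fun_prop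
  rw [← Ioc_union_Ioi_eq_Ioi zero_le_one]
  refine IntegrableOn.union ?_ ?_
  · have hbound : IntegrableOn (fun t : ℝ => t ^ b) (Ioc 0 1) :=
      (intervalIntegrable_iff_integrableOn_Ioc_of_le zero_le_one).1
        (intervalIntegral.intervalIntegrable_rpow' hb)
    refine hbound.mono' hmeas.restrict (ae_restrict_of_forall_mem measurableSet_Ioc fun t ht => ?_)
    have ht0 : 0 < t := ht.1
    rw [Real.norm_of_nonneg (by positivity)]
    exact mul_le_of_le_one_left (by positivity)
      (Real.rpow_le_one_of_one_le_of_nonpos (by linarith) ha)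
  · have hbound : IntegrableOn (fun t : ℝ => t ^ (a + b)) (Ioi 1) :=
      integrableOn_Ioi_rpow_of_lt hab one_pos
    refine hbound.mono' hmeas.restrict (ae_restrict_of_forall_mem measurableSet_Ioi fun t ht => ?_)
    have ht0 : 0 < t := zero_lt_one.trans ht
    rw [Real.norm_of_nonneg (by positivity), Real.rpow_add ht0]
    exact mul_le_mul_of_nonneg_right (Real.rpow_le_rpow_of_nonpos ht0 (by linarith) ha)
      (by positivity)

theorem integrable_one_add_abs_rpow_mul_abs_rpow {a b : ℝ} (hb : -1 < b) (hab : a + b < -1) :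
    Integrable (fun v : ℝ => (1 + |v|) ^ a * |v| ^ b) := by
  set g := fun v : ℝ => (1 + |v|) ^ a * |v| ^ b
  have hIoi : IntegrableOn g (Ioi 0) :=
    (integrableOn_Ioi_one_add_rpow_mul_rpow hb hab).congr_fun
      (fun t ht => by simp only [g, abs_of_pos (mem_Ioi.1 ht)]) measurableSet_Ioi
  have hIio : IntegrableOn g (Iio 0) := by
    have := ((Measure.measurePreserving_neg (volume : Measure ℝ)).integrableOn_comp_preimage
      (Homeomorph.neg ℝ).measurableEmbedding).2 hIoi
    simpa [g, Function.comp_def] using this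
  rw [← integrableOn_univ, ← Iio_union_Ici (a := (0 : ℝ))]
  exact hIio.union ((integrableOn_Ici_iff_integrableOn_Ioi (f := g)).2 hIoi)

theorem rpow_le_three_rpow_neg_mul_one_add_rpow {x y c : ℝ} (hc : c ≤ 0) (h : 1 + y ≤ 3 * x)
    (hy : 0 ≤ y) : x ^ c ≤ 3 ^ (-c) * (1 + y) ^ c := by
  have hx : 0 < x := by linarith
  calc x ^ c = 3 ^ (-c) * (3 * x) ^ c := by
        rw [Real.mul_rpow (by norm_num) hx.le, ← mul_assoc, ← Real.rpow_add (by norm_num),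
          neg_add_cancel, Real.rpow_zero, one_mul]
    _ ≤ 3 ^ (-c) * (1 + y) ^ c :=
        mul_le_mul_of_nonneg_left (Real.rpow_le_rpow_of_nonpos (by linarith) h hc) (by positivity)

theorem integrable_abs_add_one_rpow_mul_abs_rpow {c : ℝ} (hc : -1 < c) (hc2 : c + c < -1) :
    Integrable (fun v : ℝ => |v + 1| ^ c * |v| ^ c) := by
  have hc0 : c ≤ 0 := by linarith
  set g := fun v : ℝ => (1 + |v|) ^ c * |v| ^ c
  have hg : Integrable g := integrable_one_add_abs_rpow_mul_abs_rpow hc hc2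
  have hg0 : ∀ v, 0 ≤ g v := fun v => by positivity
  refine ((hg.add (hg.comp_add_right 1)).const_mul (3 ^ (-c))).mono' (by fun_prop)
    (ae_of_all _ fun v => ?_)
  rw [Real.norm_of_nonneg (by positivity)]
  -- one of `|v|`, `|v + 1|` is at least a third of one plus the other
  rcases le_total (-1 / 2) v with hv | hv
  · have h3 : 1 + |v| ≤ 3 * |v + 1| := by
      cases abs_cases v <;> cases abs_cases (v + 1) <;> linarith
    calc |v + 1| ^ c * |v| ^ c ≤ 3 ^ (-c) * g v := by
          rw [← mul_assoc]
          gcongr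
          exact rpow_le_three_rpow_neg_mul_one_add_rpow hc0 h3 (abs_nonneg v)
      _ ≤ 3 ^ (-c) * (g v + g (v + 1)) := by gcongr; linarith [hg0 (v + 1)]
  · have h3 : 1 + |v + 1| ≤ 3 * |v| := by
      cases abs_cases v <;> cases abs_cases (v + 1) <;> linarith
    calc |v + 1| ^ c * |v| ^ c ≤ 3 ^ (-c) * g (v + 1) := by
          rw [mul_comm, ← mul_assoc]
          gcongr
          exact rpow_le_three_rpow_neg_mul_one_add_rpow hc0 h3 (abs_nonneg _)
      _ ≤ 3 ^ (-c) * (g v + g (v + 1)) := by gcongr; linarith [hg0 v]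

theorem lintegral_ofReal_abs_add_rpow_mul_ofReal_abs_rpow (c : ℝ) {t : ℝ} (ht : 0 < t) :
    ∫⁻ u, ENNReal.ofReal (|u + t| ^ c) * ENNReal.ofReal (|u| ^ c)
      = ENNReal.ofReal (t ^ (2 * c + 1)) *
          ∫⁻ v, ENNReal.ofReal (|v + 1| ^ c) * ENNReal.ofReal (|v| ^ c) := by
  have hscale : ∀ v : ℝ, ENNReal.ofReal (|t * v + t| ^ c) * ENNReal.ofReal (|t * v| ^ c)
      = ENNReal.ofReal (t ^ (2 * c)) *
          (ENNReal.ofReal (|v + 1| ^ c) * ENNReal.ofReal (|v| ^ c)) := by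
    intro v
    rw [show t * v + t = t * (v + 1) by ring, abs_mul, abs_mul, abs_of_pos ht,
      Real.mul_rpow ht.le (abs_nonneg _), Real.mul_rpow ht.le (abs_nonneg _),
      ENNReal.ofReal_mul (by positivity), ENNReal.ofReal_mul (by positivity),
      two_mul, Real.rpow_add ht, ENNReal.ofReal_mul (by positivity)]
    ring
  conv_lhs => rw [← Real.smul_map_volume_mul_left ht.ne']
  rw [lintegral_smul_measure, lintegral_map (by fun_prop) (measurable_const_mul t),
    lintegral_congr hscale, lintegral_const_mul _ (by fun_prop), smul_eq_mul, ← mul_assoc,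
    ← ENNReal.ofReal_mul (abs_nonneg t), abs_of_pos ht, Real.rpow_add ht, Real.rpow_one,
    mul_comm t]

theorem lintegral_lintegral_sub_mul_mul {G : Type*} [MeasurableSpace G] [AddCommGroup G]
    [MeasurableAdd₂ G] {μ : Measure G} [SFinite μ] [μ.IsAddRightInvariant]
    {k φ : G → ℝ≥0∞} (hk : Measurable k) (hφ : Measurable φ) :
    ∫⁻ u, ∫⁻ s, k (s - u) * φ s * φ u ∂μ ∂μ = ∫⁻ t, k t * ∫⁻ u, φ (u + t) * φ u ∂μ ∂μ := by
  calc ∫⁻ u, ∫⁻ s, k (s - u) * φ s * φ u ∂μ ∂μ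
      = ∫⁻ u, ∫⁻ t, k t * (φ (u + t) * φ u) ∂μ ∂μ := by
        refine lintegral_congr fun u => ?_
        rw [← lintegral_add_right_eq_self _ u]
        simp only [add_sub_cancel_right, add_comm u, mul_assoc]
    _ = ∫⁻ t, ∫⁻ u, k t * (φ (u + t) * φ u) ∂μ ∂μ :=
        lintegral_lintegral_swap (by fun_prop)
    _ = ∫⁻ t, k t * ∫⁻ u, φ (u + t) * φ u ∂μ ∂μ :=
        lintegral_congr fun t => lintegral_const_mul _ (by fun_prop)

theorem lintegral_lintegral_one_add_sub_rpow_mul_abs_rpow_lt_top {a c : ℝ} (hc : -1 < c)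
    (hc2 : c + c < -1) (ha : a + (2 * c + 1) < -1) :
    ∫⁻ u, ∫⁻ s, (Ioi 0).indicator (fun t => ENNReal.ofReal ((1 + t) ^ a)) (s - u) *
      ENNReal.ofReal (|s| ^ c) * ENNReal.ofReal (|u| ^ c) < ⊤ := by
  set B := ∫⁻ v, ENNReal.ofReal (|v + 1| ^ c) * ENNReal.ofReal (|v| ^ c)
  have hB : B < ⊤ := by
    have := (integrable_abs_add_one_rpow_mul_abs_rpow hc hc2).lintegral_lt_top
    simpa only [ENNReal.ofReal_mul (Real.rpow_nonneg (abs_nonneg _) c)] using this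
  have hT : IntegrableOn (fun t : ℝ => (1 + t) ^ a * t ^ (2 * c + 1)) (Ioi 0) :=
    integrableOn_Ioi_one_add_rpow_mul_rpow (by linarith) ha
  rw [lintegral_lintegral_sub_mul_mul ((by fun_prop : Measurable _).indicator measurableSet_Ioi)
    (by fun_prop)]
  calc ∫⁻ t, (Ioi 0).indicator (fun t => ENNReal.ofReal ((1 + t) ^ a)) t *
        ∫⁻ u, ENNReal.ofReal (|u + t| ^ c) * ENNReal.ofReal (|u| ^ c)
      = ∫⁻ t in Ioi 0, ENNReal.ofReal ((1 + t) ^ a) *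
          ∫⁻ u, ENNReal.ofReal (|u + t| ^ c) * ENNReal.ofReal (|u| ^ c) := by
        rw [← lintegral_indicator measurableSet_Ioi]
        simp only [indicator_mul_left]
    _ = ∫⁻ t in Ioi 0, ENNReal.ofReal ((1 + t) ^ a * t ^ (2 * c + 1)) * B :=
        setLIntegral_congr_fun measurableSet_Ioi fun t (ht : 0 < t) => by
          rw [lintegral_ofReal_abs_add_rpow_mul_ofReal_abs_rpow c ht, ← mul_assoc,
            ← ENNReal.ofReal_mul (by positivity)]
    _ < ⊤ := by
        rw [lintegral_mul_const _ (by fun_prop)]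
        exact ENNReal.mul_lt_top hT.lintegral_lt_top hB

/-- The limiting kernel `h(s,u) = ((1 - e^{i(s-u)})/(i(s-u))) |s|^γ |u|^γ 1_{u<s}` satisfies
`∫∫ ‖h(s,u)‖^α ds du < ∞` when `H ∈ (1/2,1)` and `α(1-H) < 1/2`. -/
theorem limit_kernel_h_alpha_integrable (α H : ℝ) (hα : α ∈ Ioo (0 : ℝ) 2)
    (hH : H ∈ Ioo (1 / 2 : ℝ) 1) (hαH : α * (1 - H) < 1 / 2)
    (γ : ℝ) (hγ : γ = 1 - H - 1 / α)
    (h : ℝ → ℝ → ℂ)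
    (hdef : ∀ s u : ℝ, h s u = if u < s then
        (1 - Complex.exp (Complex.I * ((s : ℂ) - (u : ℂ)))) / (Complex.I * ((s : ℂ) - (u : ℂ))) *
          ((|s| ^ γ * |u| ^ γ : ℝ) : ℂ)
      else 0) :
    ∫⁻ u : ℝ, ∫⁻ s : ℝ, ENNReal.ofReal (‖h s u‖ ^ α) < ⊤ := by
  obtain ⟨hα0, -⟩ := hα
  have hc : γ * α = α * (1 - H) - 1 := by rw [hγ]; field_simp
  set k : ℝ → ℝ≥0∞ := (Ioi 0).indicator fun t => ENNReal.ofReal ((1 + t) ^ (-α))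
  have hbound : ∀ s u, ENNReal.ofReal (‖h s u‖ ^ α) ≤ ENNReal.ofReal (3 ^ α) *
      (k (s - u) * ENNReal.ofReal (|s| ^ (γ * α)) * ENNReal.ofReal (|u| ^ (γ * α))) := by
    intro s u
    rw [hdef]
    split_ifs with hus
    · have ht : 0 < s - u := sub_pos.2 hus
      simp only [k, indicator_of_mem (mem_Ioi.2 ht)]
      rw [← ENNReal.ofReal_mul (Real.rpow_nonneg (by linarith) _),
        ← ENNReal.ofReal_mul (by positivity), ← ENNReal.ofReal_mul (by positivity)]
      exact ENNReal.ofReal_le_ofReal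
        (norm_one_sub_exp_div_mul_abs_rpow_mul_abs_rpow_rpow_le hα0.le hus)
    · simp [Real.zero_rpow hα0.ne']
  calc ∫⁻ u, ∫⁻ s, ENNReal.ofReal (‖h s u‖ ^ α)
      ≤ ∫⁻ u, ∫⁻ s, ENNReal.ofReal (3 ^ α) *
          (k (s - u) * ENNReal.ofReal (|s| ^ (γ * α)) * ENNReal.ofReal (|u| ^ (γ * α))) :=
        lintegral_mono fun u => lintegral_mono fun s => hbound s u
    _ = ENNReal.ofReal (3 ^ α) * ∫⁻ u, ∫⁻ s,
          k (s - u) * ENNReal.ofReal (|s| ^ (γ * α)) * ENNReal.ofReal (|u| ^ (γ * α)) := by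
        simp only [lintegral_const_mul' _ _ ENNReal.ofReal_ne_top]
    _ < ⊤ := ENNReal.mul_lt_top ENNReal.ofReal_lt_top
        (lintegral_lintegral_one_add_sub_rpow_mul_abs_rpow_lt_top (by nlinarith [hH.2])
          (by linarith) (by nlinarith [hH.1]))
end

section
/- Let α ∈ (0,2), H ∈ (1/2,1) and ρ > 1/α, set γ = 1 − H − 1/α, define h(s,u) = ((1 − exp(i(s−u)))/(i(s−u))) · |s·u|^γ for u < s and h(s,u) = 0 for u ≥ s, and define ψ(s) = c·( |s|^{−ρ} 1_{{|s|>1}}(s) + 1_{{|s|≤1}}(s) ) where c > 0 is chosen so that ∫_ℝ ψ(s)^α ds = 1. Then for every ε > 0 there exists a constant C > 0 such that for all s, u ≠ 0 with s ≠ u: log_+( ‖h(s,u)‖ / (ψ(s) ψ(u)) ) ≤ C · ( |s|^ε + |s|^{−ε} ) · ( |u|^ε + |u|^{−ε} ). -/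
open MeasureTheory Set Real

/-! The kernel is bounded by `|s|^γ |u|^γ` because `|1 - e^{iθ}| ≤ |θ|`, and the weight is `c` or
`c |t|^{-ρ}`, so wherever the kernel does not vanish the logarithm of the ratio is at most
`2 |log c| + (|γ| + |ρ|) (|log |s|| + |log |u||)`. Finally `|log t| ≤ (t^ε + t^{-ε}) / ε`, and since
`t^ε + t^{-ε} ≥ 2` the sum of two such bounds is dominated by their product. -/

/-- The weight `ψ` of the statement. -/
noncomputable def cutoffPowerWeight (c ρ t : ℝ) : ℝ :=
  c * (|t| ^ (-ρ) * {x : ℝ | 1 < |x|}.indicator 1 t + {x : ℝ | |x| ≤ 1}.indicator 1 t)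

/-- The kernel `h` of the statement. -/
noncomputable def kernel (γ s u : ℝ) : ℂ :=
  if u < s then
    (1 - Complex.exp (Complex.I * ((s : ℂ) - (u : ℂ)))) / (Complex.I * ((s : ℂ) - (u : ℂ))) *
      ((|s| ^ γ * |u| ^ γ : ℝ) : ℂ)
  else 0

theorem two_le_rpow_add_rpow_neg {t : ℝ} (ht : 0 < t) (ε : ℝ) : 2 ≤ t ^ ε + t ^ (-ε) := by
  rw [rpow_neg ht.le]
  have hpos : 0 < t ^ ε := rpow_pos_of_pos ht ε
  have hsq : t ^ ε + (t ^ ε)⁻¹ - 2 = (t ^ ε - 1) ^ 2 / t ^ ε := by field_simp; ring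
  rw [← sub_nonneg, hsq]
  positivity

theorem abs_log_le_rpow_add_rpow_neg_div {t ε : ℝ} (ht : 0 < t) (hε : 0 < ε) :
    |log t| ≤ (t ^ ε + t ^ (-ε)) / ε := by
  rw [abs_le', add_div]
  constructor
  · linarith [log_le_rpow_div ht.le hε, div_nonneg (rpow_nonneg ht.le (-ε)) hε.le]
  · have := log_le_rpow_div (inv_nonneg.2 ht.le) hε
    rw [log_inv, inv_rpow ht.le, ← rpow_neg ht.le] at this
    linarith [div_nonneg (rpow_nonneg ht.le ε) hε.le]

theorem abs_log_add_abs_log_le {s u ε : ℝ} (hs : 0 < s) (hu : 0 < u) (hε : 0 < ε) :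
    |log s| + |log u| ≤ (s ^ ε + s ^ (-ε)) * (u ^ ε + u ^ (-ε)) / ε := by
  calc |log s| + |log u| ≤ (s ^ ε + s ^ (-ε)) / ε + (u ^ ε + u ^ (-ε)) / ε :=
        add_le_add (abs_log_le_rpow_add_rpow_neg_div hs hε) (abs_log_le_rpow_add_rpow_neg_div hu hε)
    _ = ((s ^ ε + s ^ (-ε)) + (u ^ ε + u ^ (-ε))) / ε := by ring
    _ ≤ _ := by
      gcongr
      exact add_le_mul (two_le_rpow_add_rpow_neg hs ε) (two_le_rpow_add_rpow_neg hu ε)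

theorem norm_one_sub_exp_I_mul_div_le_one (θ : ℝ) :
    ‖(1 - Complex.exp (Complex.I * θ)) / (Complex.I * θ)‖ ≤ 1 := by
  rw [norm_div, norm_sub_rev, norm_mul, Complex.norm_I, one_mul, Complex.norm_real]
  exact div_le_one_of_le₀ Real.norm_exp_I_mul_ofReal_sub_one_le (norm_nonneg _)

theorem norm_kernel_le (γ s u : ℝ) : ‖kernel γ s u‖ ≤ |s| ^ γ * |u| ^ γ := by
  have hpow : 0 ≤ |s| ^ γ * |u| ^ γ := by positivity
  unfold kernel
  split_ifs
  · rw [norm_mul, Complex.norm_real, Real.norm_of_nonneg hpow, ← Complex.ofReal_sub]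
    exact mul_le_of_le_one_left hpow (norm_one_sub_exp_I_mul_div_le_one _)
  · simpa using hpow

theorem log_norm_kernel_le {γ s u : ℝ} (hs : s ≠ 0) (hu : u ≠ 0) (hk : kernel γ s u ≠ 0) :
    log ‖kernel γ s u‖ ≤ |γ| * (|log (|s|)| + |log (|u|)|) := by
  have hs' : 0 < |s| := abs_pos.2 hs
  have hu' : 0 < |u| := abs_pos.2 hu
  calc log ‖kernel γ s u‖ ≤ log (|s| ^ γ * |u| ^ γ) :=
        log_le_log (norm_pos_iff.2 hk) (norm_kernel_le γ s u)
    _ = γ * log |s| + γ * log |u| := by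
        rw [log_mul (by positivity) (by positivity), log_rpow hs', log_rpow hu']
    _ ≤ |γ| * |log (|s|)| + |γ| * |log (|u|)| :=
        add_le_add ((le_abs_self _).trans (abs_mul _ _).le) ((le_abs_self _).trans (abs_mul _ _).le)
    _ = _ := (mul_add _ _ _).symm

theorem cutoffPowerWeight_eq (c ρ t : ℝ) :
    cutoffPowerWeight c ρ t = if 1 < |t| then c * |t| ^ (-ρ) else c := by
  unfold cutoffPowerWeight
  split_ifs with ht
  · simp [ht, not_le.2 ht]
  · simp [ht, not_lt.1 ht]

theorem cutoffPowerWeight_pos {c : ℝ} (hc : 0 < c) (ρ t : ℝ) : 0 < cutoffPowerWeight c ρ t := by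
  rw [cutoffPowerWeight_eq]
  split_ifs <;> positivity

theorem neg_log_cutoffPowerWeight_le {c : ℝ} (hc : 0 < c) (ρ t : ℝ) :
    -log (cutoffPowerWeight c ρ t) ≤ |log c| + |ρ| * |log (|t|)| := by
  have hlog := neg_abs_le (log c)
  have hρ := le_abs_self (ρ * log |t|)
  rw [abs_mul] at hρ
  rw [cutoffPowerWeight_eq]
  split_ifs with ht
  · rw [log_mul hc.ne' (by positivity), log_rpow (by linarith)]
    linarith
  · linarith [mul_nonneg (abs_nonneg ρ) (abs_nonneg (log |t|))]

theorem log_norm_kernel_div_le {γ c ρ s u : ℝ} (hc : 0 < c) (hs : s ≠ 0) (hu : u ≠ 0)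
    (hk : kernel γ s u ≠ 0) :
    log (‖kernel γ s u‖ / (cutoffPowerWeight c ρ s * cutoffPowerWeight c ρ u)) ≤
      2 * |log c| + (|γ| + |ρ|) * (|log (|s|)| + |log (|u|)|) := by
  have hψs := cutoffPowerWeight_pos hc ρ s
  have hψu := cutoffPowerWeight_pos hc ρ u
  rw [log_div (norm_ne_zero_iff.2 hk) (mul_pos hψs hψu).ne', log_mul hψs.ne' hψu.ne']
  linarith [log_norm_kernel_le hs hu hk, neg_log_cutoffPowerWeight_le hc ρ s,
    neg_log_cutoffPowerWeight_le hc ρ u]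

theorem log_plus_kernel_bound_general (ρ : ℝ)
    (γ : ℝ)
    (h : ℝ → ℝ → ℂ)
    (hdef : ∀ s u : ℝ, h s u = if u < s then
        (1 - Complex.exp (Complex.I * ((s : ℂ) - (u : ℂ)))) / (Complex.I * ((s : ℂ) - (u : ℂ))) *
          ((|s| ^ γ * |u| ^ γ : ℝ) : ℂ)
      else 0)
    (c : ℝ) (hc : 0 < c)
    (ψ : ℝ → ℝ)
    (hψ : ∀ s : ℝ, ψ s = c * (|s| ^ (-ρ) * {x : ℝ | 1 < |x|}.indicator 1 s +
      {x : ℝ | |x| ≤ 1}.indicator 1 s)) :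
    ∀ ε : ℝ, 0 < ε → ∃ C : ℝ, 0 < C ∧ ∀ s u : ℝ, s ≠ 0 → u ≠ 0 → s ≠ u →
      max (Real.log (‖h s u‖ / (ψ s * ψ u))) 0 ≤
        C * (|s| ^ ε + |s| ^ (-ε)) * (|u| ^ ε + |u| ^ (-ε)) := by
  obtain rfl : h = kernel γ := funext fun s => funext (hdef s)
  obtain rfl : ψ = cutoffPowerWeight c ρ := funext hψ
  intro ε hε
  set K := 2 * |log c|
  set K' := |γ| + |ρ|
  refine ⟨K + K' / ε + 1, by positivity, fun s u hs hu _ => ?_⟩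
  have hs' : 0 < |s| := abs_pos.2 hs
  have hu' : 0 < |u| := abs_pos.2 hu
  have hlog := abs_log_add_abs_log_le hs' hu' hε
  have hAs := two_le_rpow_add_rpow_neg hs' ε
  have hAu := two_le_rpow_add_rpow_neg hu' ε
  set As := |s| ^ ε + |s| ^ (-ε)
  set Au := |u| ^ ε + |u| ^ (-ε)
  have hC : 0 ≤ (K + K' / ε + 1) * As * Au := by positivity
  rcases eq_or_ne (kernel γ s u) 0 with hk | hk
  · simpa only [hk, norm_zero, zero_div, log_zero, max_self] using hC
  refine max_le ?_ hC
  calc log (‖kernel γ s u‖ / (cutoffPowerWeight c ρ s * cutoffPowerWeight c ρ u))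
      ≤ K + K' * (|log (|s|)| + |log (|u|)|) := log_norm_kernel_div_le hc hs hu hk
    _ ≤ K * (As * Au) + K' * (As * Au / ε) := by
      gcongr
      exact le_mul_of_one_le_right (by positivity) (by nlinarith)
    _ = (K + K' / ε) * As * Au := by ring
    _ ≤ (K + K' / ε + 1) * As * Au := by gcongr ?_ * _ * _; linarith

/-- Logarithmic estimate: for every `ε > 0` there is `C > 0` with
`log₊(‖h(s,u)‖ / (ψ(s)ψ(u))) ≤ C (|s|^ε + |s|^{-ε})(|u|^ε + |u|^{-ε})`, where
`log₊ x = max (log x) 0`. -/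
theorem log_plus_kernel_bound (α H ρ : ℝ) (hα : α ∈ Ioo (0 : ℝ) 2)
    (hH : H ∈ Ioo (1 / 2 : ℝ) 1) (hρ : 1 / α < ρ)
    (γ : ℝ) (hγ : γ = 1 - H - 1 / α)
    (h : ℝ → ℝ → ℂ)
    (hdef : ∀ s u : ℝ, h s u = if u < s then
        (1 - Complex.exp (Complex.I * ((s : ℂ) - (u : ℂ)))) / (Complex.I * ((s : ℂ) - (u : ℂ))) *
          ((|s| ^ γ * |u| ^ γ : ℝ) : ℂ)
      else 0)
    (c : ℝ) (hc : 0 < c)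
    (ψ : ℝ → ℝ)
    (hψ : ∀ s : ℝ, ψ s = c * (|s| ^ (-ρ) * {x : ℝ | 1 < |x|}.indicator 1 s +
      {x : ℝ | |x| ≤ 1}.indicator 1 s))
    (hnorm : ∫ s : ℝ, ψ s ^ α = 1) :
    ∀ ε : ℝ, 0 < ε → ∃ C : ℝ, 0 < C ∧ ∀ s u : ℝ, s ≠ 0 → u ≠ 0 → s ≠ u →
      max (Real.log (‖h s u‖ / (ψ s * ψ u))) 0 ≤
        C * (|s| ^ ε + |s| ^ (-ε)) * (|u| ^ ε + |u| ^ (-ε)) :=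
  log_plus_kernel_bound_general ρ γ h hdef c hc ψ hψ
end

section
/- Let α ∈ (0,2) and H ∈ (1/2,1), set γ = 1 − H − 1/α, define r(s) = ((1 − exp(−is))/(is)) · |s|^γ for s ≠ 0, g_n(x) = (1 − exp(inx))/(1 − exp(ix)) for x ∉ 2πℤ, and h_n(s,u) = n^{1−2H} · g_n(s−u) · r(s) · conj(r(u)) for u < s (and 0 for u ≥ s). Then for every δ ∈ (0,1) there exists a constant C > 0 such that for all n ≥ 1 and all (s,u) with u < s, s, u ≠ 0, |s| < δn and |u| < δn: ‖n^{−2/α} · h_n(s/n, u/n)‖ ≤ C · |s·u|^γ · ( 1_{[s−1,s)}(u) + |s − u|^{−1} · 1_{(−∞, s−1)}(u) ). -/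
/-!
Put `x = (s - u) / n`, which lies in `(0, 2) ⊆ (0, π]` because `|s|, |u| < δn < n`.
Jordan's inequality `sin y ≥ 2y/π` bounds the denominator `‖1 - e^{ix}‖ = 2 sin (x/2)` of `g_n`
below by `2x/π`, while its numerator is at most `min (nx) 2`; so `‖g_n x‖ ≤ π n min 1 (s - u)⁻¹`.
Each factor `r` has modulus at most `|·|^γ`, and the powers of `n` cancel exactly because
`-2/α + (1 - 2H) + 1 = 2γ`. Hence `C = π` works for every `δ`.
-/

open Set

namespace Complex

lemma norm_one_sub_exp_I_mul_ofReal_le (t : ℝ) : ‖1 - exp (I * t)‖ ≤ |t| := by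
  rw [norm_sub_rev, ← Real.norm_eq_abs]
  exact Real.norm_exp_I_mul_ofReal_sub_one_le

lemma norm_one_sub_exp_I_mul_ofReal_le_two (t : ℝ) : ‖1 - exp (I * t)‖ ≤ 2 := by
  rw [norm_sub_rev, norm_exp_I_mul_ofReal_sub_one, norm_mul, Real.norm_eq_abs, Real.norm_eq_abs,
    abs_two]
  linarith [Real.abs_sin_le_one (t / 2)]

lemma two_div_pi_mul_le_norm_one_sub_exp_I_mul_ofReal {x : ℝ} (hx0 : 0 ≤ x)
    (hx : x ≤ Real.pi) : 2 / Real.pi * x ≤ ‖1 - exp (I * x)‖ := by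
  rw [norm_sub_rev, norm_exp_I_mul_ofReal_sub_one, norm_mul, Real.norm_eq_abs, Real.norm_eq_abs,
    abs_two]
  have := Real.mul_le_sin (x := x / 2) (by linarith) (by linarith)
  calc 2 / Real.pi * x = 2 * (2 / Real.pi * (x / 2)) := by ring
    _ ≤ 2 * |Real.sin (x / 2)| := by gcongr; exact this.trans (le_abs_self _)

lemma norm_one_sub_exp_neg_div_mul_rpow_le (γ s : ℝ) :
    ‖(1 - exp (-(I * s))) / (I * s) * ((|s| ^ γ : ℝ) : ℂ)‖ ≤ |s| ^ γ := by
  have hnum : ‖1 - exp (-(I * s))‖ ≤ |s| := by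
    simpa [abs_neg] using norm_one_sub_exp_I_mul_ofReal_le (-s)
  simp only [norm_mul, norm_div, norm_I, one_mul, norm_real, Real.norm_eq_abs,
    abs_of_nonneg (by positivity : 0 ≤ |s| ^ γ)]
  exact mul_le_of_le_one_left (by positivity) (div_le_one_of_le₀ hnum (abs_nonneg s))

lemma norm_one_sub_exp_mul_div_one_sub_exp_le (n : ℕ) {x : ℝ} (hx0 : 0 < x)
    (hx : x ≤ Real.pi) :
    ‖(1 - exp (I * n * x)) / (1 - exp (I * x))‖ ≤ Real.pi * n * min 1 (n * x)⁻¹ := by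
  have hden := two_div_pi_mul_le_norm_one_sub_exp_I_mul_ofReal hx0.le hx
  have hden0 : 0 < 2 / Real.pi * x := by positivity
  have hnum : (I * n * x : ℂ) = I * ((n * x : ℝ) : ℂ) := by push_cast; ring
  rw [norm_div, hnum, mul_min_of_nonneg _ _ (by positivity), mul_one]
  refine le_min ?_ ?_
  · calc ‖1 - exp (I * ((n * x : ℝ) : ℂ))‖ / ‖1 - exp (I * x)‖
          ≤ (n * x) / (2 / Real.pi * x) := by
          gcongr
          simpa [abs_of_nonneg hx0.le] using norm_one_sub_exp_I_mul_ofReal_le (n * x)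
      _ ≤ Real.pi * n := by
          field_simp
          nlinarith [Real.pi_pos]
  · obtain rfl | hn := n.eq_zero_or_pos
    · simp
    calc ‖1 - exp (I * ((n * x : ℝ) : ℂ))‖ / ‖1 - exp (I * x)‖ ≤ 2 / (2 / Real.pi * x) := by
          gcongr
          exact norm_one_sub_exp_I_mul_ofReal_le_two _
      _ = Real.pi * n * (n * x)⁻¹ := by
          field_simp

end Complex

lemma Real.ne_two_pi_mul_intCast_of_pos_of_lt_two_pi {x : ℝ} (h0 : 0 < x) (h : x < 2 * Real.pi)
    (m : ℤ) : x ≠ 2 * Real.pi * m := by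
  rintro rfl
  have hm0 : (0 : ℝ) < m := pos_of_mul_pos_right h0 (by positivity)
  have hm1 : (m : ℝ) < 1 := by nlinarith [Real.pi_pos]
  have : (0 : ℤ) < m := by exact_mod_cast hm0
  have : m < 1 := by exact_mod_cast hm1
  omega

lemma indicator_Ico_add_rpow_neg_one_mul_indicator_Iio {s u : ℝ} (hus : u < s) :
    (Ico (s - 1) s).indicator 1 u + |s - u| ^ (-1 : ℝ) * (Iio (s - 1)).indicator 1 u =
      min 1 (s - u)⁻¹ := by
  rw [abs_of_pos (sub_pos.2 hus), Real.rpow_neg_one]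
  by_cases h : s - 1 ≤ u
  · rw [indicator_of_mem (mem_Ico.2 ⟨h, hus⟩), indicator_of_notMem (by simpa using h),
      min_eq_left (one_le_inv₀ (sub_pos.2 hus) |>.2 (by linarith))]
    simp
  · rw [not_le] at h
    rw [indicator_of_notMem (fun hm => h.not_ge (mem_Ico.1 hm).1), indicator_of_mem (mem_Iio.2 h),
      min_eq_right (inv_le_one_of_one_le₀ (by linarith))]
    simp

lemma Real.rpow_mul_abs_div_rpow {N : ℝ} (hN : 0 < N) (s γ : ℝ) :
    N ^ γ * |s / N| ^ γ = |s| ^ γ := by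
  rw [← Real.mul_rpow hN.le (abs_nonneg _), abs_div, abs_of_pos hN, mul_div_cancel₀ _ hN.ne']

theorem prelimit_kernel_domination_general (α H : ℝ)
    (γ : ℝ) (hγ : γ = 1 - H - 1 / α)
    (r : ℝ → ℂ)
    (hr : ∀ s : ℝ, s ≠ 0 → r s =
      (1 - Complex.exp (-(Complex.I * (s : ℂ)))) / (Complex.I * (s : ℂ)) * ((|s| ^ γ : ℝ) : ℂ))
    (g : ℕ → ℝ → ℂ)
    (hg : ∀ (n : ℕ) (x : ℝ), (∀ m : ℤ, x ≠ 2 * Real.pi * m) →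
      g n x = (1 - Complex.exp (Complex.I * (n : ℂ) * (x : ℂ))) /
        (1 - Complex.exp (Complex.I * (x : ℂ))))
    (hn : ℕ → ℝ → ℝ → ℂ)
    (hhn : ∀ (n : ℕ) (s u : ℝ), hn n s u = if u < s then
        (((n : ℝ) ^ (1 - 2 * H) : ℝ) : ℂ) * g n (s - u) * r s * (starRingEnd ℂ) (r u)
      else 0) :
    ∀ δ : ℝ, δ ∈ Ioo (0 : ℝ) 1 → ∃ C : ℝ, 0 < C ∧
      ∀ (n : ℕ) (s u : ℝ), 1 ≤ n → u < s → s ≠ 0 → u ≠ 0 →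
        |s| < δ * n → |u| < δ * n →
        ‖(((n : ℝ) ^ (-2 / α) : ℝ) : ℂ) * hn n (s / n) (u / n)‖ ≤
          C * (|s| ^ γ * |u| ^ γ) *
            ((Ico (s - 1) s).indicator 1 u + |s - u| ^ (-1 : ℝ) * (Iio (s - 1)).indicator 1 u) := by
  intro δ hδ
  refine ⟨Real.pi, Real.pi_pos, fun n s u hn1 hus hs hu hsδ huδ => ?_⟩
  have hN : (0 : ℝ) < n := by exact_mod_cast hn1
  have hx0 : 0 < (s - u) / n := div_pos (sub_pos.2 hus) hN
  have hx2 : (s - u) / n < 2 := by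
    rw [div_lt_iff₀ hN]
    nlinarith [le_abs_self s, neg_abs_le u, hδ.2]
  have hgn : ‖g n ((s - u) / n)‖ ≤ Real.pi * n * min 1 (s - u)⁻¹ := by
    rw [hg n _ (Real.ne_two_pi_mul_intCast_of_pos_of_lt_two_pi hx0 (by linarith [Real.two_le_pi]))]
    simpa [mul_div_cancel₀ _ hN.ne'] using
      Complex.norm_one_sub_exp_mul_div_one_sub_exp_le n hx0 (by linarith [Real.two_le_pi])
  have hr_le {t : ℝ} (ht : t ≠ 0) : ‖r (t / n)‖ ≤ |t / n| ^ γ := by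
    rw [hr _ (div_ne_zero ht hN.ne')]
    exact Complex.norm_one_sub_exp_neg_div_mul_rpow_le γ _
  have hscale : (n : ℝ) ^ (-2 / α) * n ^ (1 - 2 * H) * n = n ^ γ * n ^ γ := by
    rw [← Real.rpow_add hN, ← Real.rpow_add hN, ← Real.rpow_add_one hN.ne', hγ]
    ring_nf
  rw [hhn, if_pos (div_lt_div_of_pos_right hus hN), ← sub_div,
    indicator_Ico_add_rpow_neg_one_mul_indicator_Iio hus]
  simp only [norm_mul, Complex.norm_real, Complex.norm_conj, Real.norm_eq_abs,
    abs_of_nonneg (Real.rpow_nonneg hN.le _)]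
  calc _ ≤ (n : ℝ) ^ (-2 / α) * (n ^ (1 - 2 * H) * (Real.pi * n * min 1 (s - u)⁻¹)
          * |s / n| ^ γ * |u / n| ^ γ) := by
        gcongr
        exacts [hr_le hs, hr_le hu]
    _ = Real.pi * ((n ^ γ * |s / n| ^ γ) * (n ^ γ * |u / n| ^ γ)) * min 1 (s - u)⁻¹ := by
        linear_combination Real.pi * min 1 (s - u)⁻¹ * |s / n| ^ γ * |u / n| ^ γ * hscale
    _ = _ := by rw [Real.rpow_mul_abs_div_rpow hN, Real.rpow_mul_abs_div_rpow hN]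

/-- Uniform domination of the rescaled prelimit kernels on `(-δn, δn)²`: for `δ ∈ (0,1)`
there is `C > 0` such that, for all `n ≥ 1` and `u < s` with `s,u ≠ 0`, `|s| < δn`, `|u| < δn`,
`‖n^{-2/α} h_n(s/n, u/n)‖ ≤ C |s|^γ |u|^γ (1_{[s-1,s)}(u) + |s-u|^{-1} 1_{(-∞,s-1)}(u))`. -/
theorem prelimit_kernel_domination (α H : ℝ) (hα : α ∈ Ioo (0 : ℝ) 2)
    (hH : H ∈ Ioo (1 / 2 : ℝ) 1)
    (γ : ℝ) (hγ : γ = 1 - H - 1 / α)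
    (r : ℝ → ℂ)
    (hr : ∀ s : ℝ, s ≠ 0 → r s =
      (1 - Complex.exp (-(Complex.I * (s : ℂ)))) / (Complex.I * (s : ℂ)) * ((|s| ^ γ : ℝ) : ℂ))
    (g : ℕ → ℝ → ℂ)
    (hg : ∀ (n : ℕ) (x : ℝ), (∀ m : ℤ, x ≠ 2 * Real.pi * m) →
      g n x = (1 - Complex.exp (Complex.I * (n : ℂ) * (x : ℂ))) /
        (1 - Complex.exp (Complex.I * (x : ℂ))))
    (hn : ℕ → ℝ → ℝ → ℂ)
    (hhn : ∀ (n : ℕ) (s u : ℝ), hn n s u = if u < s then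
        (((n : ℝ) ^ (1 - 2 * H) : ℝ) : ℂ) * g n (s - u) * r s * (starRingEnd ℂ) (r u)
      else 0) :
    ∀ δ : ℝ, δ ∈ Ioo (0 : ℝ) 1 → ∃ C : ℝ, 0 < C ∧
      ∀ (n : ℕ) (s u : ℝ), 1 ≤ n → u < s → s ≠ 0 → u ≠ 0 →
        |s| < δ * n → |u| < δ * n →
        ‖(((n : ℝ) ^ (-2 / α) : ℝ) : ℂ) * hn n (s / n) (u / n)‖ ≤
          C * (|s| ^ γ * |u| ^ γ) *
            ((Ico (s - 1) s).indicator 1 u + |s - u| ^ (-1 : ℝ) * (Iio (s - 1)).indicator 1 u) :=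
  prelimit_kernel_domination_general α H γ hγ r hr g hg hn hhn
end

section
/- Let α ∈ (0,2) and H ∈ (1/2,1), set γ = 1 − H − 1/α, define r(s) = ((1 − exp(−is))/(is)) · |s|^γ for s ≠ 0, g_n(x) = (1 − exp(inx))/(1 − exp(ix)) for x ∉ 2πℤ, and h_n(s,u) = n^{1−2H} · g_n(s−u) · r(s) · conj(r(u)) for u < s (and 0 for u ≥ s). Then for every a ∈ (0,1) there exists a constant C > 0 such that for all n ≥ 1 and all (s,u) with u < s, s, u ≠ 0 and s − u ∉ 2πℤ: ‖h_n(s,u)‖ ≤ C · n^{2−2H−a} · |s·u|^{γ−1} · dist(s − u, 2πℤ)^{−a}. -/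
/-!
The kernel factorises as `n^{1-2H} g_n(s-u) r(s) conj (r(u))`, and `|r(s)| ≤ 2|s|^{γ-1}` because
`|1 - e^{-is}| ≤ 2`. The ratio `g_n(x)` has two bounds: `n`, since it is a geometric sum of `n`
unit complex numbers, and `π / dist(x, 2πℤ)`, by Jordan's inequality applied to the denominator
`|1 - e^{ix}| = 2|sin(x/2)|`. As `min(A, B) ≤ A^a B^{1-a}`, the two bounds together give
the factor `n^{1-a} dist(x, 2πℤ)^{-a}`, and `C = 4π^a` works.
-/

open Set Complex
open scoped Real

lemma le_rpow_mul_rpow_of_le_of_le {x A B a : ℝ} (hx : 0 ≤ x) (hxA : x ≤ A) (hxB : x ≤ B)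
    (ha₀ : 0 ≤ a) (ha₁ : a ≤ 1) : x ≤ A ^ a * B ^ (1 - a) :=
  calc x = x ^ a * x ^ (1 - a) := by
        rw [← Real.rpow_add' hx (by norm_num), add_sub_cancel, Real.rpow_one]
    _ ≤ A ^ a * B ^ (1 - a) := by
        have := Real.rpow_nonneg (hx.trans hxA) a
        gcongr

lemma norm_one_sub_pow_div_one_sub_le {𝕜 : Type*} [NormedField 𝕜] {z : 𝕜} (hz : ‖z‖ ≤ 1)
    (n : ℕ) : ‖(1 - z ^ n) / (1 - z)‖ ≤ n := by
  rcases eq_or_ne z 1 with rfl | hz₁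
  · simp
  rw [← mul_neg_geom_sum, mul_div_cancel_left₀ _ (sub_ne_zero.mpr hz₁.symm)]
  calc ‖∑ i ∈ Finset.range n, z ^ i‖ ≤ ∑ i ∈ Finset.range n, ‖z ^ i‖ := norm_sum_le _ _
    _ ≤ ∑ _i ∈ Finset.range n, (1 : ℝ) := by
        gcongr with i; rw [norm_pow]; exact pow_le_one₀ (norm_nonneg z) hz
    _ = n := by simp

lemma norm_one_sub_exp_le_two {w : ℂ} (hw : w.re = 0) : ‖1 - exp w‖ ≤ 2 :=
  (norm_sub_le _ _).trans (by simp [Complex.norm_exp, hw]; norm_num)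

lemma infDist_range_two_pi_mul_int (x : ℝ) :
    Metric.infDist x (range fun m : ℤ => 2 * π * m) = ‖(x : AddCircle (2 * π))‖ := by
  rw [QuotientAddGroup.norm_mk]
  congr 1
  ext y
  simp [AddSubgroup.mem_zmultiples_iff, mul_comm]

lemma two_div_pi_mul_abs_le_norm_one_sub_exp_I_mul {y : ℝ} (hy : |y| ≤ π) :
    2 / π * |y| ≤ ‖1 - exp (I * y)‖ := by
  have hy2 : |y / 2| ≤ π / 2 := by rw [abs_div, abs_two]; linarith
  rw [norm_sub_rev, norm_exp_I_mul_ofReal_sub_one, norm_mul, Real.norm_ofNat, Real.norm_eq_abs]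
  have := Real.mul_abs_le_abs_sin hy2
  rw [abs_div, abs_two] at this
  linarith

-- Jordan's inequality `sin t ≥ 2t/π`, applied to the representative of `x` in `[-π, π]`.
lemma two_div_pi_mul_norm_coe_le_norm_one_sub_exp_I_mul (x : ℝ) :
    2 / π * ‖(x : AddCircle (2 * π))‖ ≤ ‖1 - exp (I * x)‖ := by
  set k := round ((2 * π)⁻¹ * x)
  have hperiod : exp (I * x) = exp (I * ↑(x - k * (2 * π))) := by
    rw [show I * ↑(x - k * (2 * π)) = I * x + -(k * (2 * π * I)) by push_cast; ring,
      exp_add, exp_neg, exp_int_mul_two_pi_mul_I, inv_one, mul_one]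
  have hhalf := AddCircle.norm_le_half_period (2 * π) (x := x) (by positivity)
  rw [abs_of_pos (by positivity), mul_div_cancel_left₀ _ two_ne_zero] at hhalf
  rw [AddCircle.norm_eq] at hhalf ⊢
  rw [hperiod]
  exact two_div_pi_mul_abs_le_norm_one_sub_exp_I_mul hhalf

lemma norm_one_sub_exp_I_mul_nat_div_le (n : ℕ) {x : ℝ} (hx : (x : AddCircle (2 * π)) ≠ 0)
    {a : ℝ} (ha₀ : 0 ≤ a) (ha₁ : a ≤ 1) :
    ‖(1 - exp (I * n * x)) / (1 - exp (I * x))‖ ≤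
      (π / ‖(x : AddCircle (2 * π))‖) ^ a * (n : ℝ) ^ (1 - a) := by
  have hd : 0 < ‖(x : AddCircle (2 * π))‖ := norm_pos_iff.mpr hx
  have hden := two_div_pi_mul_norm_coe_le_norm_one_sub_exp_I_mul x
  refine le_rpow_mul_rpow_of_le_of_le (norm_nonneg _) ?_ ?_ ha₀ ha₁
  · calc ‖(1 - exp (I * n * x)) / (1 - exp (I * x))‖
        ≤ 2 / (2 / π * ‖(x : AddCircle (2 * π))‖) := by
          rw [norm_div]
          exact div_le_div₀ zero_le_two (norm_one_sub_exp_le_two (by simp)) (by positivity) hden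
      _ = π / ‖(x : AddCircle (2 * π))‖ := by field_simp
  · rw [show I * n * x = n * (I * x) by ring, exp_nat_mul]
    exact norm_one_sub_pow_div_one_sub_le (by rw [norm_exp_I_mul_ofReal]) n

lemma norm_one_sub_exp_neg_I_mul_div_mul_rpow_le (γ : ℝ) {s : ℝ} (hs : s ≠ 0) :
    ‖(1 - exp (-(I * s))) / (I * s) * ((|s| ^ γ : ℝ) : ℂ)‖ ≤ 2 * |s| ^ (γ - 1) := by
  have hs' : 0 < |s| := abs_pos.mpr hs
  have hIs : ‖I * s‖ = |s| := by simp
  have hpow : ‖((|s| ^ γ : ℝ) : ℂ)‖ = |s| ^ γ := by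
    rw [norm_real, Real.norm_eq_abs, abs_of_nonneg (by positivity)]
  rw [norm_mul, norm_div, hIs, hpow, Real.rpow_sub hs', Real.rpow_one]
  calc ‖1 - exp (-(I * s))‖ / |s| * |s| ^ γ ≤ 2 / |s| * |s| ^ γ := by
        gcongr; exact norm_one_sub_exp_le_two (by simp)
    _ = 2 * (|s| ^ γ / |s|) := by ring

theorem prelimit_kernel_bound_near_lattice_general (H : ℝ)
    (γ : ℝ)
    (r : ℝ → ℂ)
    (hr : ∀ s : ℝ, s ≠ 0 → r s =
      (1 - Complex.exp (-(Complex.I * (s : ℂ)))) / (Complex.I * (s : ℂ)) * ((|s| ^ γ : ℝ) : ℂ))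
    (g : ℕ → ℝ → ℂ)
    (hg : ∀ (n : ℕ) (x : ℝ), (∀ m : ℤ, x ≠ 2 * Real.pi * m) →
      g n x = (1 - Complex.exp (Complex.I * (n : ℂ) * (x : ℂ))) /
        (1 - Complex.exp (Complex.I * (x : ℂ))))
    (hn : ℕ → ℝ → ℝ → ℂ)
    (hhn : ∀ (n : ℕ) (s u : ℝ), hn n s u = if u < s then
        (((n : ℝ) ^ (1 - 2 * H) : ℝ) : ℂ) * g n (s - u) * r s * (starRingEnd ℂ) (r u)
      else 0) :
    ∀ a : ℝ, a ∈ Ioo (0 : ℝ) 1 → ∃ C : ℝ, 0 < C ∧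
      ∀ (n : ℕ) (s u : ℝ), 1 ≤ n → u < s → s ≠ 0 → u ≠ 0 →
        (∀ m : ℤ, s - u ≠ 2 * Real.pi * m) →
        ‖hn n s u‖ ≤ C * (n : ℝ) ^ (2 - 2 * H - a) * (|s| ^ (γ - 1) * |u| ^ (γ - 1)) *
          Metric.infDist (s - u) (Set.range fun m : ℤ => 2 * Real.pi * (m : ℝ)) ^ (-a) := by
  rintro a ⟨ha₀, ha₁⟩
  refine ⟨4 * π ^ a, by positivity, fun n s u hn₁ hus hs hu hsu => ?_⟩
  have hx : ((s - u : ℝ) : AddCircle (2 * π)) ≠ 0 := by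
    rintro hx
    obtain ⟨m, hm⟩ := (AddCircle.coe_eq_zero_iff _).mp hx
    exact hsu m (by rw [← hm, zsmul_eq_mul]; ring)
  have hd : 0 < ‖((s - u : ℝ) : AddCircle (2 * π))‖ := norm_pos_iff.mpr hx
  have hn₀ : (0 : ℝ) < n := by exact_mod_cast hn₁
  rw [infDist_range_two_pi_mul_int, hhn, if_pos hus, hg n _ hsu, hr s hs, hr u hu, norm_mul,
    norm_mul, norm_mul, RCLike.norm_conj, norm_real, Real.norm_of_nonneg (by positivity)]
  calc _ ≤ n ^ (1 - 2 * H) * ((π / ‖((s - u : ℝ) : AddCircle (2 * π))‖) ^ a * n ^ (1 - a)) *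
        (2 * |s| ^ (γ - 1)) * (2 * |u| ^ (γ - 1)) := by
        gcongr
        · exact norm_one_sub_exp_I_mul_nat_div_le n hx ha₀.le ha₁.le
        · exact norm_one_sub_exp_neg_I_mul_div_mul_rpow_le γ hs
        · exact norm_one_sub_exp_neg_I_mul_div_mul_rpow_le γ hu
    _ = _ := by
        rw [Real.div_rpow (by positivity) hd.le, div_eq_mul_inv, ← Real.rpow_neg hd.le,
          show 2 - 2 * H - a = (1 - 2 * H) + (1 - a) by ring, Real.rpow_add hn₀]
        ring

/-- Bound on the prelimit kernels near `2πℤ`: for `a ∈ (0,1)` there is `C > 0` with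
`‖h_n(s,u)‖ ≤ C n^{2-2H-a} |s|^{γ-1} |u|^{γ-1} dist(s-u, 2πℤ)^{-a}` for `s - u ∉ 2πℤ`. -/
theorem prelimit_kernel_bound_near_lattice (α H : ℝ) (hα : α ∈ Ioo (0 : ℝ) 2)
    (hH : H ∈ Ioo (1 / 2 : ℝ) 1)
    (γ : ℝ) (hγ : γ = 1 - H - 1 / α)
    (r : ℝ → ℂ)
    (hr : ∀ s : ℝ, s ≠ 0 → r s =
      (1 - Complex.exp (-(Complex.I * (s : ℂ)))) / (Complex.I * (s : ℂ)) * ((|s| ^ γ : ℝ) : ℂ))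
    (g : ℕ → ℝ → ℂ)
    (hg : ∀ (n : ℕ) (x : ℝ), (∀ m : ℤ, x ≠ 2 * Real.pi * m) →
      g n x = (1 - Complex.exp (Complex.I * (n : ℂ) * (x : ℂ))) /
        (1 - Complex.exp (Complex.I * (x : ℂ))))
    (hn : ℕ → ℝ → ℝ → ℂ)
    (hhn : ∀ (n : ℕ) (s u : ℝ), hn n s u = if u < s then
        (((n : ℝ) ^ (1 - 2 * H) : ℝ) : ℂ) * g n (s - u) * r s * (starRingEnd ℂ) (r u)
      else 0) :
    ∀ a : ℝ, a ∈ Ioo (0 : ℝ) 1 → ∃ C : ℝ, 0 < C ∧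
      ∀ (n : ℕ) (s u : ℝ), 1 ≤ n → u < s → s ≠ 0 → u ≠ 0 →
        (∀ m : ℤ, s - u ≠ 2 * Real.pi * m) →
        ‖hn n s u‖ ≤ C * (n : ℝ) ^ (2 - 2 * H - a) * (|s| ^ (γ - 1) * |u| ^ (γ - 1)) *
          Metric.infDist (s - u) (Set.range fun m : ℤ => 2 * Real.pi * (m : ℝ)) ^ (-a) :=
  prelimit_kernel_bound_near_lattice_general H γ r hr g hg hn hhn
end

section
/- Let α ∈ (0,2) and H ∈ (1/2,1) satisfy α(1−H) < 1/2, set γ = 1 − H − 1/α, and let a ∈ (0,1) with aα < 1 and δ ∈ (0,1). Then ∫∫_{{|s| > δ, |u| > δ, u < s, s−u ∉ 2πℤ}} |s|^{α(γ−1)} |u|^{α(γ−1)} · dist(s − u, 2πℤ)^{−aα} ds du < ∞. -/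
/-!
Write `β = αH + 1 > 1`, so that `α(γ - 1) = -β`, and `g(x) = dist(x, 2πℤ)^{-aα}`. The integrand
is dominated by `W(u) W(s) g(s - u)` with `W(x) = |x|^{-β} 1_{|x|>δ}`. The kernel `g` is
`2π`-periodic and, because `aα < 1`, integrable over a period. Cutting `{s > δ}` into intervals of
length `2π`, on each of which `W` is at most its value at the left endpoint, gives
`∫ W(s) g(s - u) ds ≤ 2 (∑ₖ (δ + 2πk)^{-β}) ∫₀^{2π} g` uniformly in `u` (the tail `s < -δ` is the
same by evenness of `g`), and `∫ W < ∞` since `β > 1`.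
-/

open MeasureTheory Set Real
open scoped ENNReal

theorem Set.Ioi_subset_iUnion_Ioc_add_nat_mul {T : ℝ} (hT : 0 < T) (t : ℝ) :
    Ioi t ⊆ ⋃ k : ℕ, Ioc (t + k * T) (t + k * T + T) := by
  intro x hx
  set r := (x - t) / T
  have hr : 0 < r := div_pos (sub_pos.2 hx) hT
  have hxr : x = t + r * T := by simp only [r]; field_simp; ring
  have hcast : ((⌈r⌉₊ - 1 : ℕ) : ℝ) = ⌈r⌉₊ - 1 := Nat.cast_pred (Nat.ceil_pos.2 hr)
  have hle : r ≤ ⌈r⌉₊ := Nat.le_ceil r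
  have hlt : (⌈r⌉₊ : ℝ) < r + 1 := Nat.ceil_lt_add_one hr.le
  refine mem_iUnion.2 ⟨⌈r⌉₊ - 1, ?_, ?_⟩ <;> rw [hcast, hxr] <;> nlinarith

theorem apply_abs_le_indicator_add_indicator_neg (f : ℝ → ℝ≥0∞) {S : Set ℝ} {x : ℝ}
    (hx : |x| ∈ S) : f |x| ≤ S.indicator f x + S.indicator f (-x) := by
  rcases abs_choice x with h | h <;> rw [h] at hx ⊢
  · exact (indicator_of_mem hx f).ge.trans le_self_add
  · exact (indicator_of_mem hx f).ge.trans le_add_self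

theorem lintegral_add_comp_neg {f : ℝ → ℝ≥0∞} (hf : Measurable f) :
    ∫⁻ x, (f x + f (-x)) = 2 * ∫⁻ x, f x := by
  rw [lintegral_add_left hf, lintegral_neg_eq_self f, two_mul]

theorem lintegral_lintegral_mul_lt_top {X Y : Type*} [MeasurableSpace X] [MeasurableSpace Y]
    {μ : Measure X} {ν : Measure Y} {W : X → ℝ≥0∞} {k : X → Y → ℝ≥0∞} {K : ℝ≥0∞}
    (hk : ∀ u, Measurable (k u)) (hW : ∫⁻ u, W u ∂μ < ∞) (hK : K < ∞)
    (hinner : ∀ u, ∫⁻ s, k u s ∂ν ≤ K) :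
    ∫⁻ u, ∫⁻ s, W u * k u s ∂ν ∂μ < ∞ :=
  calc ∫⁻ u, ∫⁻ s, W u * k u s ∂ν ∂μ = ∫⁻ u, W u * ∫⁻ s, k u s ∂ν ∂μ :=
        lintegral_congr fun u => lintegral_const_mul _ (hk u)
    _ ≤ ∫⁻ u, W u * K ∂μ := lintegral_mono fun u => by gcongr; exact hinner u
    _ = (∫⁻ u, W u ∂μ) * K := lintegral_mul_const' _ _ hK.ne
    _ < ∞ := ENNReal.mul_lt_top hW hK

theorem tsum_ofReal_add_nat_mul_rpow_neg_lt_top {t T β : ℝ} (ht : 0 < t) (hT : 0 < T)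
    (hβ : 1 < β) : ∑' k : ℕ, ENNReal.ofReal ((t + k * T) ^ (-β)) < ∞ := by
  have hsum : Summable fun k : ℕ => (t + k * T) ^ (-β) := by
    refine (((Real.summable_one_div_nat_add_rpow (t / T) β).2 hβ).mul_left (T ^ (-β))).congr
      fun k => ?_
    have hpos : 0 < (k : ℝ) + t / T := by positivity
    rw [abs_of_pos hpos, one_div, ← rpow_neg hpos.le, ← mul_rpow hT.le hpos.le]
    congr 1
    field_simp
    ring
  rw [← ENNReal.ofReal_tsum_of_nonneg (fun k => by positivity) hsum]
  exact ENNReal.ofReal_lt_top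

theorem setLIntegral_Ioi_ofReal_rpow_neg_lt_top {t β : ℝ} (ht : 0 < t) (hβ : 1 < β) :
    ∫⁻ x in Ioi t, ENNReal.ofReal (x ^ (-β)) < ∞ :=
  ((integrableOn_Ioi_rpow_iff ht).2 (by linarith)).setLIntegral_lt_top

namespace Function.Periodic

variable {g : ℝ → ℝ≥0∞} {T : ℝ}

theorem setLIntegral_Ioc_add_eq (hg : Periodic g T) (hT : 0 < T) (t s : ℝ) :
    ∫⁻ x in Ioc t (t + T), g x = ∫⁻ x in Ioc s (s + T), g x := by
  refine (isAddFundamentalDomain_Ioc hT t).setLIntegral_eq (isAddFundamentalDomain_Ioc hT s) g ?_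
  rintro ⟨_, k, rfl⟩ x
  simpa [add_comm x] using hg.zsmul k x

theorem setLIntegral_Ioc_comp_sub (hg : Periodic g T) (hT : 0 < T) (u : ℝ) :
    ∫⁻ x in Ioc 0 T, g (x - u) = ∫⁻ x in Ioc 0 T, g x := by
  have hshift : Periodic (fun x => g (x - u)) T := hg.sub_const u
  calc ∫⁻ x in Ioc 0 T, g (x - u) = ∫⁻ x in Ioc (0 + u) (T + u), g (x - u) := by
        simpa [add_comm T] using hshift.setLIntegral_Ioc_add_eq hT 0 u
    _ = ∫⁻ x in Ioc 0 T, g x := by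
        rw [← preimage_sub_const_Ioc, (measurePreserving_sub_right volume u)
          |>.setLIntegral_comp_preimage_emb (measurableEmbedding_subRight u)]

theorem setLIntegral_Ioi_mul_le {f : ℝ → ℝ≥0∞} {t : ℝ} (hg : Periodic g T) (hgm : Measurable g)
    (hT : 0 < T) (hf : AntitoneOn f (Ici t)) :
    ∫⁻ s in Ioi t, f s * g s ≤ (∑' k : ℕ, f (t + k * T)) * ∫⁻ x in Ioc 0 T, g x := by
  have hpiece (a : ℝ) (ha : t ≤ a) :
      ∫⁻ s in Ioc a (a + T), f s * g s ≤ f a * ∫⁻ x in Ioc 0 T, g x :=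
    calc ∫⁻ s in Ioc a (a + T), f s * g s ≤ ∫⁻ s in Ioc a (a + T), f a * g s :=
          setLIntegral_mono' measurableSet_Ioc fun s hs => by
            gcongr
            exact hf ha (ha.trans hs.1.le) hs.1.le
      _ = f a * ∫⁻ x in Ioc 0 T, g x := by
          rw [lintegral_const_mul _ hgm, hg.setLIntegral_Ioc_add_eq hT a 0, zero_add]
  calc ∫⁻ s in Ioi t, f s * g s
      ≤ ∫⁻ s in ⋃ k : ℕ, Ioc (t + k * T) (t + k * T + T), f s * g s :=
        lintegral_mono_set (Ioi_subset_iUnion_Ioc_add_nat_mul hT t)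
    _ ≤ ∑' k : ℕ, ∫⁻ s in Ioc (t + k * T) (t + k * T + T), f s * g s := lintegral_iUnion_le _ _
    _ ≤ ∑' k : ℕ, f (t + k * T) * ∫⁻ x in Ioc 0 T, g x :=
        ENNReal.tsum_le_tsum fun k => hpiece _ (le_add_of_nonneg_right (by positivity))
    _ = _ := ENNReal.tsum_mul_right

theorem lintegral_indicator_Ioi_mul_comp_sub_le {f : ℝ → ℝ≥0∞} {t : ℝ} (hg : Periodic g T)
    (hgm : Measurable g) (hT : 0 < T) (hf : AntitoneOn f (Ici t)) (u : ℝ) :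
    ∫⁻ s, (Ioi t).indicator f s * g (s - u) ≤
      (∑' k : ℕ, f (t + k * T)) * ∫⁻ x in Ioc 0 T, g x := by
  simp_rw [← indicator_mul_left _ f fun s => g (s - u)]
  rw [lintegral_indicator measurableSet_Ioi, ← hg.setLIntegral_Ioc_comp_sub hT u]
  exact (hg.sub_const u).setLIntegral_Ioi_mul_le (hgm.comp (measurable_sub_const u)) hT hf

theorem lintegral_indicator_abs_mul_comp_sub_le {f : ℝ → ℝ≥0∞} {t : ℝ} (hg : Periodic g T)
    (hg_even : Function.Even g) (hgm : Measurable g) (hT : 0 < T) (hf : AntitoneOn f (Ici t))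
    (hfm : Measurable f) (u : ℝ) :
    ∫⁻ s, ((Ioi t).indicator f s + (Ioi t).indicator f (-s)) * g (s - u) ≤
      2 * ((∑' k : ℕ, f (t + k * T)) * ∫⁻ x in Ioc 0 T, g x) := by
  have hreflect : ∫⁻ s, (Ioi t).indicator f (-s) * g (s - u) =
      ∫⁻ s, (Ioi t).indicator f s * g (s - -u) := by
    rw [← lintegral_neg_eq_self]
    congr 1 with s
    rw [neg_neg, ← hg_even]
    ring_nf
  rw [two_mul]
  simp_rw [add_mul]
  rw [lintegral_add_left (by fun_prop (disch := exact measurableSet_Ioi)), hreflect]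
  gcongr <;> exact hg.lintegral_indicator_Ioi_mul_comp_sub_le hgm hT hf _

end Function.Periodic

theorem AddCircle.norm_coe_eq_infDist (p x : ℝ) :
    ‖(x : AddCircle p)‖ = Metric.infDist x (range fun m : ℤ => p * m) := by
  have : (range fun m : ℤ => p * m) = AddSubgroup.zmultiples p := by
    ext y; simp [AddSubgroup.mem_zmultiples_iff, mul_comm p, eq_comm]
  rw [this]
  exact QuotientAddGroup.norm_mk x

noncomputable def circleNormRpowNeg (T c x : ℝ) : ℝ≥0∞ :=
  ENNReal.ofReal (‖(x : AddCircle T)‖ ^ (-c))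

namespace circleNormRpowNeg

variable {T c : ℝ}

theorem periodic : Function.Periodic (circleNormRpowNeg T c) T := fun x => by
  simp [circleNormRpowNeg]

theorem even : Function.Even (circleNormRpowNeg T c) := fun x => by
  simp [circleNormRpowNeg]

theorem measurable : Measurable (circleNormRpowNeg T c) := by
  unfold circleNormRpowNeg; fun_prop

theorem setLIntegral_Ioc_lt_top (hT : 0 < T) (hc : c < 1) :
    ∫⁻ x in Ioc 0 T, circleNormRpowNeg T c x < ∞ := by
  set v := (Icc 0 (T / 2)).indicator fun y => ENNReal.ofReal (y ^ (-c))
  have hv : Measurable v := by fun_prop (disch := exact measurableSet_Icc)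
  have hpointwise :
      ∀ x ∈ Ioc (-(T / 2)) (-(T / 2) + T), circleNormRpowNeg T c x ≤ v x + v (-x) := by
    intro x hx
    have habs : |x| ≤ T / 2 := abs_le.2 ⟨hx.1.le, by linarith [hx.2]⟩
    rw [circleNormRpowNeg,
      (AddCircle.norm_coe_eq_abs_iff (p := T) hT.ne').2 (by rwa [abs_of_pos hT])]
    exact apply_abs_le_indicator_add_indicator_neg (fun y => ENNReal.ofReal (y ^ (-c)))
      ⟨abs_nonneg x, habs⟩
  have hv_fin : ∫⁻ x, v x < ∞ := by
    rw [lintegral_indicator measurableSet_Icc, setLIntegral_congr Ioc_ae_eq_Icc.symm]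
    refine IntegrableOn.setLIntegral_lt_top ?_
    rw [← uIoc_of_le (by positivity), ← intervalIntegrable_iff]
    exact intervalIntegral.intervalIntegrable_rpow' (by linarith)
  calc ∫⁻ x in Ioc 0 T, circleNormRpowNeg T c x
      = ∫⁻ x in Ioc (-(T / 2)) (-(T / 2) + T), circleNormRpowNeg T c x := by
        simpa using periodic.setLIntegral_Ioc_add_eq hT 0 (-(T / 2))
    _ ≤ ∫⁻ x in Ioc (-(T / 2)) (-(T / 2) + T), (v x + v (-x)) :=
        setLIntegral_mono' measurableSet_Ioc hpointwise
    _ ≤ ∫⁻ x, (v x + v (-x)) := setLIntegral_le_lintegral _ _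
    _ < ∞ := by
        rw [lintegral_add_comp_neg hv]
        exact ENNReal.mul_lt_top ENNReal.ofNat_lt_top hv_fin

end circleNormRpowNeg

theorem dominating_integral_finite_general (α H : ℝ) (hα : α ∈ Ioo (0 : ℝ) 2)
    (hH : H ∈ Ioo (1 / 2 : ℝ) 1)
    (γ : ℝ) (hγ : γ = 1 - H - 1 / α)
    (a δ : ℝ) (haα : a * α < 1) (hδ : δ ∈ Ioo (0 : ℝ) 1) :
    ∫⁻ u : ℝ, ∫⁻ s : ℝ,
      {p : ℝ × ℝ | δ < |p.1| ∧ δ < |p.2| ∧ p.2 < p.1 ∧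
          ∀ m : ℤ, p.1 - p.2 ≠ 2 * Real.pi * m}.indicator
        (fun p : ℝ × ℝ => ENNReal.ofReal
          (|p.1| ^ (α * (γ - 1)) * |p.2| ^ (α * (γ - 1)) *
            Metric.infDist (p.1 - p.2) (Set.range fun m : ℤ => 2 * Real.pi * (m : ℝ)) ^
              (-(a * α)))) (s, u) < ⊤ := by
  set β := α * H + 1
  have hβ : 1 < β := by nlinarith [hα.1, hH.1]
  have hexp : α * (γ - 1) = -β := by
    rw [hγ]
    field_simp [hα.1.ne']
    ring
  set f : ℝ → ℝ≥0∞ := fun y => ENNReal.ofReal (y ^ (-β))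
  set W : ℝ → ℝ≥0∞ := fun x => (Ioi δ).indicator f x + (Ioi δ).indicator f (-x)
  set g := circleNormRpowNeg (2 * π) (a * α)
  have hf_anti : AntitoneOn f (Ici δ) := fun x hx y _ hxy =>
    ENNReal.ofReal_le_ofReal (rpow_le_rpow_of_nonpos (hδ.1.trans_le hx) hxy (by linarith))
  have hfm : Measurable f := by fun_prop
  have hg : Measurable g := circleNormRpowNeg.measurable
  have hW : ∫⁻ x, W x < ∞ := by
    rw [lintegral_add_comp_neg (hfm.indicator measurableSet_Ioi),
      lintegral_indicator measurableSet_Ioi]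
    exact ENNReal.mul_lt_top ENNReal.ofNat_lt_top
      (setLIntegral_Ioi_ofReal_rpow_neg_lt_top hδ.1 hβ)
  have hK : 2 * ((∑' k : ℕ, f (δ + k * (2 * π))) * ∫⁻ x in Ioc 0 (2 * π), g x) < ∞ :=
    ENNReal.mul_lt_top ENNReal.ofNat_lt_top <| ENNReal.mul_lt_top
      (tsum_ofReal_add_nat_mul_rpow_neg_lt_top hδ.1 two_pi_pos hβ)
      (circleNormRpowNeg.setLIntegral_Ioc_lt_top two_pi_pos haα)
  refine lt_of_le_of_lt (lintegral_mono fun u => lintegral_mono fun s => ?_)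
    (lintegral_lintegral_mul_lt_top (k := fun u s => W s * g (s - u))
      (fun _ => by fun_prop (disch := exact measurableSet_Ioi)) hW hK
      (circleNormRpowNeg.periodic.lintegral_indicator_abs_mul_comp_sub_le
        circleNormRpowNeg.even hg two_pi_pos hf_anti hfm))
  refine indicator_apply_le' (fun ⟨hs, hu, _, _⟩ => ?_) fun _ => zero_le
  rw [hexp, ← AddCircle.norm_coe_eq_infDist, ENNReal.ofReal_mul (by positivity),
    ENNReal.ofReal_mul (by positivity), mul_comm (ENNReal.ofReal (|s| ^ _)), mul_assoc]
  gcongr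
  · exact apply_abs_le_indicator_add_indicator_neg f hu
  · exact apply_abs_le_indicator_add_indicator_neg f hs
  · rfl

/-- Finiteness of the dominating integral on `{|s| > δ, |u| > δ, u < s, s-u ∉ 2πℤ}`:
`∫∫ |s|^{α(γ-1)} |u|^{α(γ-1)} dist(s-u, 2πℤ)^{-aα} ds du < ∞`. -/
theorem dominating_integral_finite (α H : ℝ) (hα : α ∈ Ioo (0 : ℝ) 2)
    (hH : H ∈ Ioo (1 / 2 : ℝ) 1) (hαH : α * (1 - H) < 1 / 2)
    (γ : ℝ) (hγ : γ = 1 - H - 1 / α)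
    (a δ : ℝ) (ha : a ∈ Ioo (0 : ℝ) 1) (haα : a * α < 1) (hδ : δ ∈ Ioo (0 : ℝ) 1) :
    ∫⁻ u : ℝ, ∫⁻ s : ℝ,
      {p : ℝ × ℝ | δ < |p.1| ∧ δ < |p.2| ∧ p.2 < p.1 ∧
          ∀ m : ℤ, p.1 - p.2 ≠ 2 * Real.pi * m}.indicator
        (fun p : ℝ × ℝ => ENNReal.ofReal
          (|p.1| ^ (α * (γ - 1)) * |p.2| ^ (α * (γ - 1)) *
            Metric.infDist (p.1 - p.2) (Set.range fun m : ℤ => 2 * Real.pi * (m : ℝ)) ^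
              (-(a * α)))) (s, u) < ⊤ :=
  dominating_integral_finite_general α H hα hH γ hγ a δ haα hδ
end
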